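/- arXiv:2111.13003 — 6 statements merged into one kernel-verified Lean document; each statement's English description precedes it below -/
import Mathlib

section
/- Let B ∈ ℝ^{n×m} and define the Riccati operator D(X) = CᵀC + AᵀX(I + BBᵀX)⁻¹A on positive semidefinite matrices. Then D is monotone with respect to the Loewner order: if Z₁ ⪰ Z₂ ⪰ 0 (and the relevant inverses exist, which they do for PSD arguments), then D(Z₁) ⪰ D(Z₂). -/
open Matrix

private lemma transpose_sol {n m : ℕ} {S : Matrix (Fin m) (Fin m) ℝ}
    {L : Matrix (Fin m) (Fin n) ℝ} {Z : Matrix (Fin n) (Fin n) ℝ}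
    {B : Matrix (Fin n) (Fin m) ℝ}
    (hSL : S * L = Bᵀ * Z) (hST : Sᵀ = S) (hZT : Zᵀ = Z) : Lᵀ * S = Z * B := by
  have h := congrArg transpose hSL
  rw [transpose_mul, hST, transpose_mul, transpose_transpose, hZT] at h
  exact h

/-- Completing-the-square identity for the quadratic matrix map. -/
private lemma sq_id {n m : ℕ} (B : Matrix (Fin n) (Fin m) ℝ)
    (X : Matrix (Fin n) (Fin n) ℝ) (S : Matrix (Fin m) (Fin m) ℝ)
    (L L₀ : Matrix (Fin m) (Fin n) ℝ)
    (hS : S = 1 + Bᵀ * X * B) (hX : Xᵀ = X) (h1 : S * L₀ = Bᵀ * X) :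
    (1 - B * L)ᵀ * X * (1 - B * L) + Lᵀ * L
      = (X - L₀ᵀ * S * L₀) + (L - L₀)ᵀ * S * (L - L₀) := by
  have hST : Sᵀ = S := by
    rw [hS]; simp [transpose_add, transpose_mul, hX, Matrix.mul_assoc]
  have h2 : L₀ᵀ * S = X * B := transpose_sol h1 hST hX
  have e1 : Lᵀ * (S * L₀) = Lᵀ * (Bᵀ * X) := by rw [h1]
  have e2 : L₀ᵀ * (S * L) = X * (B * L) := by
    rw [← Matrix.mul_assoc, h2, Matrix.mul_assoc]
  have e3 : L₀ᵀ * (S * L₀) = X * (B * L₀) := by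
    rw [← Matrix.mul_assoc, h2, Matrix.mul_assoc]
  have expand : (L - L₀)ᵀ * S * (L - L₀)
      = Lᵀ * (S * L) - Lᵀ * (S * L₀) - L₀ᵀ * (S * L) + L₀ᵀ * (S * L₀) := by
    simp only [transpose_sub, Matrix.sub_mul, Matrix.mul_sub, Matrix.mul_assoc]
    abel
  have expand2 : L₀ᵀ * S * L₀ = X * (B * L₀) := by
    rw [Matrix.mul_assoc, e3]
  rw [expand, e1, e2, e3, expand2, hS]
  simp only [transpose_sub, transpose_mul, transpose_one, Matrix.sub_mul,
    Matrix.mul_sub, Matrix.add_mul, Matrix.mul_add, Matrix.mul_one,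
    Matrix.one_mul, Matrix.mul_assoc]
  abel

private lemma woodbury {n m : ℕ} (B : Matrix (Fin n) (Fin m) ℝ)
    (Z : Matrix (Fin n) (Fin n) ℝ) (S : Matrix (Fin m) (Fin m) ℝ)
    (L : Matrix (Fin m) (Fin n) ℝ)
    (hS : S = 1 + Bᵀ * Z * B) (hd : IsUnit S.det)
    (hL : L = S⁻¹ * (Bᵀ * Z)) (hdT : IsUnit (1 + B * Bᵀ * Z).det) :
    Z * (1 + B * Bᵀ * Z)⁻¹ = Z - Z * B * L := by
  have hcomm : (Bᵀ * Z) * (1 + B * (Bᵀ * Z)) = S * (Bᵀ * Z) := by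
    rw [hS]
    simp only [Matrix.mul_add, Matrix.add_mul, Matrix.mul_one, Matrix.one_mul,
      Matrix.mul_assoc]
  have hLT : L * (1 + B * Bᵀ * Z) = Bᵀ * Z := by
    rw [hL, Matrix.mul_assoc, Matrix.mul_assoc B Bᵀ Z, hcomm,
      Matrix.nonsing_inv_mul_cancel_left _ _ hd]
  have key : (Z - Z * B * L) * (1 + B * Bᵀ * Z) = Z := by
    rw [Matrix.sub_mul, Matrix.mul_assoc (Z * B) L, hLT]
    simp only [Matrix.mul_add, Matrix.mul_one, Matrix.mul_assoc]
    abel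
  calc Z * (1 + B * Bᵀ * Z)⁻¹
      = (Z - Z * B * L) * (1 + B * Bᵀ * Z) * (1 + B * Bᵀ * Z)⁻¹ := by rw [key]
    _ = Z - Z * B * L := Matrix.mul_nonsing_inv_cancel_right _ _ hdT

theorem stmt_3 {n m l : ℕ}
    (A : Matrix (Fin n) (Fin n) ℝ) (B : Matrix (Fin n) (Fin m) ℝ)
    (C : Matrix (Fin l) (Fin n) ℝ)
    (Z₁ Z₂ : Matrix (Fin n) (Fin n) ℝ)
    (hZ₁ : Z₁.PosSemidef) (hZ₂ : Z₂.PosSemidef)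
    (hle : (Z₁ - Z₂).PosSemidef) :
    ((Cᵀ * C + Aᵀ * Z₁ * (1 + B * Bᵀ * Z₁)⁻¹ * A) -
      (Cᵀ * C + Aᵀ * Z₂ * (1 + B * Bᵀ * Z₂)⁻¹ * A)).PosSemidef := by
  have hZ₁T : Z₁ᵀ = Z₁ := by
    simpa [conjTranspose_eq_transpose_of_trivial] using hZ₁.isHermitian.eq
  have hZ₂T : Z₂ᵀ = Z₂ := by
    simpa [conjTranspose_eq_transpose_of_trivial] using hZ₂.isHermitian.eq
  have hS₁pd : (1 + Bᵀ * Z₁ * B).PosDef := by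
    apply Matrix.PosDef.add_posSemidef Matrix.PosDef.one
    simpa [conjTranspose_eq_transpose_of_trivial] using hZ₁.conjTranspose_mul_mul_same B
  have hS₂pd : (1 + Bᵀ * Z₂ * B).PosDef := by
    apply Matrix.PosDef.add_posSemidef Matrix.PosDef.one
    simpa [conjTranspose_eq_transpose_of_trivial] using hZ₂.conjTranspose_mul_mul_same B
  have hd₁ : IsUnit (1 + Bᵀ * Z₁ * B).det := isUnit_iff_ne_zero.2 hS₁pd.det_pos.ne'
  have hd₂ : IsUnit (1 + Bᵀ * Z₂ * B).det := isUnit_iff_ne_zero.2 hS₂pd.det_pos.ne'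
  have hdT₁ : IsUnit (1 + B * Bᵀ * Z₁).det := by
    rw [Matrix.mul_assoc, Matrix.det_one_add_mul_comm]
    exact hd₁
  have hdT₂ : IsUnit (1 + B * Bᵀ * Z₂).det := by
    rw [Matrix.mul_assoc, Matrix.det_one_add_mul_comm]
    exact hd₂
  set S₁ : Matrix (Fin m) (Fin m) ℝ := 1 + Bᵀ * Z₁ * B with hS₁def
  set S₂ : Matrix (Fin m) (Fin m) ℝ := 1 + Bᵀ * Z₂ * B with hS₂def
  set L₁ : Matrix (Fin m) (Fin n) ℝ := S₁⁻¹ * (Bᵀ * Z₁) with hL₁def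
  set L₂ : Matrix (Fin m) (Fin n) ℝ := S₂⁻¹ * (Bᵀ * Z₂) with hL₂def
  have hSL₁ : S₁ * L₁ = Bᵀ * Z₁ := Matrix.mul_nonsing_inv_cancel_left _ _ hd₁
  have hSL₂ : S₂ * L₂ = Bᵀ * Z₂ := Matrix.mul_nonsing_inv_cancel_left _ _ hd₂
  have hST₁ : S₁ᵀ = S₁ := by
    rw [hS₁def]; simp [transpose_add, transpose_mul, hZ₁T, Matrix.mul_assoc]
  have hST₂ : S₂ᵀ = S₂ := by
    rw [hS₂def]; simp [transpose_add, transpose_mul, hZ₂T, Matrix.mul_assoc]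
  have hW₁ := woodbury B Z₁ S₁ L₁ hS₁def hd₁ hL₁def hdT₁
  have hW₂ := woodbury B Z₂ S₂ L₂ hS₂def hd₂ hL₂def hdT₂
  have hLT₁ : L₁ᵀ * S₁ = Z₁ * B := transpose_sol hSL₁ hST₁ hZ₁T
  have hLT₂ : L₂ᵀ * S₂ = Z₂ * B := transpose_sol hSL₂ hST₂ hZ₂T
  have hZBL₁ : Z₁ * B * L₁ = L₁ᵀ * S₁ * L₁ := by rw [hLT₁]
  have hZBL₂ : Z₂ * B * L₂ = L₂ᵀ * S₂ * L₂ := by rw [hLT₂]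
  have idA := sq_id B Z₁ S₁ L₁ L₁ hS₁def hZ₁T hSL₁
  have idB := sq_id B Z₂ S₂ L₁ L₂ hS₂def hZ₂T hSL₂
  rw [sub_self] at idA
  simp only [transpose_zero, Matrix.zero_mul, Matrix.mul_zero, add_zero] at idA
  set K : Matrix (Fin n) (Fin n) ℝ := 1 - B * L₁ with hKdef
  set M : Matrix (Fin m) (Fin n) ℝ := L₁ - L₂ with hMdef
  have hdecomp : Z₁ * (1 + B * Bᵀ * Z₁)⁻¹ - Z₂ * (1 + B * Bᵀ * Z₂)⁻¹
      = Kᵀ * (Z₁ - Z₂) * K + Mᵀ * S₂ * M := by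
    rw [hW₁, hW₂, hZBL₁, hZBL₂]
    have hmid : Kᵀ * (Z₁ - Z₂) * K
        = (Kᵀ * Z₁ * K + L₁ᵀ * L₁) - (Kᵀ * Z₂ * K + L₁ᵀ * L₁) := by
      simp only [Matrix.mul_sub, Matrix.sub_mul, Matrix.mul_assoc]
      abel
    rw [hmid, idA, idB]
    abel
  have hgoal : (Cᵀ * C + Aᵀ * Z₁ * (1 + B * Bᵀ * Z₁)⁻¹ * A) -
      (Cᵀ * C + Aᵀ * Z₂ * (1 + B * Bᵀ * Z₂)⁻¹ * A)
      = (K * A)ᵀ * (Z₁ - Z₂) * (K * A) + (M * A)ᵀ * S₂ * (M * A) := by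
    rw [add_sub_add_left_eq_sub]
    have expand : Aᵀ * Z₁ * (1 + B * Bᵀ * Z₁)⁻¹ * A - Aᵀ * Z₂ * (1 + B * Bᵀ * Z₂)⁻¹ * A
        = Aᵀ * (Z₁ * (1 + B * Bᵀ * Z₁)⁻¹ - Z₂ * (1 + B * Bᵀ * Z₂)⁻¹) * A := by
      simp only [Matrix.mul_sub, Matrix.sub_mul, Matrix.mul_assoc]
    rw [expand, hdecomp]
    simp only [transpose_mul, Matrix.mul_add, Matrix.add_mul, Matrix.mul_assoc]
  rw [hgoal]
  have p1 : ((K * A)ᵀ * (Z₁ - Z₂) * (K * A)).PosSemidef := by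
    simpa [conjTranspose_eq_transpose_of_trivial] using
      hle.conjTranspose_mul_mul_same (K * A)
  have p2 : ((M * A)ᵀ * S₂ * (M * A)).PosSemidef := by
    simpa [conjTranspose_eq_transpose_of_trivial] using
      hS₂pd.posSemidef.conjTranspose_mul_mul_same (M * A)
  exact p1.add p2
end

section
/- For positive definite matrices Z₁, Z₂ ∈ ℝ^{n×n} and any B ∈ ℝ^{n×m}: Z₁ ⪰ Z₂ if and only if Z₁(I + BBᵀZ₁)⁻¹ ⪰ Z₂(I + BBᵀZ₂)⁻¹. -/
/-!
With `W = B Bᵀ ⪰ 0`, one has `Z (I + W Z)⁻¹ = (Z⁻¹ + W)⁻¹`, so the claim follows from applying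
twice the fact that inversion reverses the Loewner order on positive definite matrices:
`Z₁ ⪰ Z₂ ↔ Z₂⁻¹ ⪰ Z₁⁻¹ ↔ Z₂⁻¹ + W ⪰ Z₁⁻¹ + W ↔ (Z₁⁻¹ + W)⁻¹ ⪰ (Z₂⁻¹ + W)⁻¹`.
-/

open Matrix

namespace Matrix

variable {n : Type*} [Fintype n] [DecidableEq n]

/-- Both sides say that the block matrix `!![A, 1; 1, B⁻¹]` is positive semidefinite, read off
through the Schur complements of its two diagonal blocks. -/
theorem PosDef.posSemidef_inv_sub_inv_iff {K : Type*} [Field K] [PartialOrder K] [StarRing K]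
    [StarOrderedRing K] {A B : Matrix n n K} (hA : A.PosDef) (hB : B.PosDef) :
    (B⁻¹ - A⁻¹).PosSemidef ↔ (A - B).PosSemidef := by
  have := hA.isUnit.invertible
  have := hB.isUnit.invertible
  have := hB.inv.isUnit.invertible
  calc (B⁻¹ - A⁻¹).PosSemidef ↔ (fromBlocks A 1 1 B⁻¹).PosSemidef := by
        simpa using (PosDef.fromBlocks₁₁ 1 B⁻¹ hA).symm
    _ ↔ (A - B).PosSemidef := by
        simpa using PosDef.fromBlocks₂₂ A 1 hB.inv

theorem mul_inv_one_add_mul_eq_inv_inv_add {R : Type*} [CommRing R] {Z : Matrix n n R}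
    (hZ : IsUnit Z) (W : Matrix n n R) : Z * (1 + W * Z)⁻¹ = (Z⁻¹ + W)⁻¹ := by
  have := hZ.invertible
  rw [← inv_mul_of_invertible Z, ← add_mul, mul_inv_rev, mul_inv_cancel_left_of_invertible]

end Matrix

theorem stmt_4 {n m : ℕ}
    (B : Matrix (Fin n) (Fin m) ℝ)
    (Z₁ Z₂ : Matrix (Fin n) (Fin n) ℝ)
    (hZ₁ : Z₁.PosDef) (hZ₂ : Z₂.PosDef) :
    (Z₁ - Z₂).PosSemidef ↔
      (Z₁ * (1 + B * Bᵀ * Z₁)⁻¹ - Z₂ * (1 + B * Bᵀ * Z₂)⁻¹).PosSemidef := by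
  have hW : (B * Bᵀ).PosSemidef := by
    simpa using posSemidef_self_mul_conjTranspose B
  have hP₁ : (Z₁⁻¹ + B * Bᵀ).PosDef := hZ₁.inv.add_posSemidef hW
  have hP₂ : (Z₂⁻¹ + B * Bᵀ).PosDef := hZ₂.inv.add_posSemidef hW
  rw [mul_inv_one_add_mul_eq_inv_inv_add hZ₁.isUnit,
    mul_inv_one_add_mul_eq_inv_inv_add hZ₂.isUnit, hP₂.posSemidef_inv_sub_inv_iff hP₁,
    add_sub_add_right_eq_sub, hZ₁.posSemidef_inv_sub_inv_iff hZ₂]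
end

section
/- One step of the difference Riccati recursion admits a block form: if X_t = V_tᵀ(I + T_tT_tᵀ)⁻¹V_t, then CᵀC + AᵀX_t(I + BBᵀX_t)⁻¹A = V_{t+1}ᵀ(I + T_{t+1}T_{t+1}ᵀ)⁻¹V_{t+1}, where V_{t+1} = [C; V_tA] (stacked vertically) and T_{t+1} = [[0, 0]; [V_tB, T_t]] (block lower triangular). -/
/-!
Write `P = 1 + T Tᵀ`, `K = B Bᵀ` and `S = 1 + (V B)(V B)ᵀ + T Tᵀ = P + V K Vᵀ`. The push-through
identity `V (1 + K Vᵀ P⁻¹ V) = S P⁻¹ V` gives `X (1 + K X)⁻¹ = Vᵀ S⁻¹ V`, invertibility of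
`1 + K X` coming from `det (1 + K Vᵀ P⁻¹ V) = det (1 + V K Vᵀ P⁻¹) = det S / det P`. On the other
side, `1 + T_{t+1} T_{t+1}ᵀ` is block diagonal with blocks `1` and `S`, so the right-hand side is
`CᵀC + Aᵀ Vᵀ S⁻¹ V A`.
-/

open Matrix

namespace Matrix

section PushThrough

variable {ι κ R : Type*} [Fintype ι] [DecidableEq ι] [Fintype κ] [DecidableEq κ] [CommRing R]
  (P : Matrix κ κ R) (V : Matrix κ ι R) (W : Matrix ι κ R) (K : Matrix ι ι R)

theorem mul_nonsing_inv_add_mul_mul_cancel (hP : IsUnit P.det)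
    (hS : IsUnit (P + V * K * W).det) :
    W * (P + V * K * W)⁻¹ * V * (1 + K * (W * P⁻¹ * V)) = W * P⁻¹ * V := by
  have hV : V * (1 + K * (W * P⁻¹ * V)) = (P + V * K * W) * (P⁻¹ * V) := by
    simp only [Matrix.mul_add, Matrix.add_mul, Matrix.mul_one, ← Matrix.mul_assoc,
      mul_nonsing_inv _ hP, Matrix.one_mul]
  rw [Matrix.mul_assoc _ V, hV, Matrix.mul_assoc W, nonsing_inv_mul_cancel_left _ _ hS,
    Matrix.mul_assoc]

theorem isUnit_det_one_add_mul_mul_nonsing_inv_mul (hP : IsUnit P.det)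
    (hS : IsUnit (P + V * K * W).det) :
    IsUnit (1 + K * (W * P⁻¹ * V)).det := by
  have hcomm : (1 + K * (W * P⁻¹ * V)).det = (1 + V * (K * W * P⁻¹)).det := by
    simp only [← Matrix.mul_assoc, det_one_add_mul_comm (K * W * P⁻¹) V]
  have hfactor : 1 + V * (K * W * P⁻¹) = (P + V * K * W) * P⁻¹ := by
    rw [Matrix.add_mul, mul_nonsing_inv _ hP, ← Matrix.mul_assoc, ← Matrix.mul_assoc]
  rw [hcomm, hfactor, det_mul]
  exact hS.mul (isUnit_nonsing_inv_det_iff.2 hP)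

theorem mul_nonsing_inv_mul_mul_inv_one_add_mul (hP : IsUnit P.det)
    (hS : IsUnit (P + V * K * W).det) :
    W * P⁻¹ * V * (1 + K * (W * P⁻¹ * V))⁻¹ = W * (P + V * K * W)⁻¹ * V :=
  calc _ = W * (P + V * K * W)⁻¹ * V * (1 + K * (W * P⁻¹ * V)) *
          (1 + K * (W * P⁻¹ * V))⁻¹ := by
        rw [mul_nonsing_inv_add_mul_mul_cancel P V W K hP hS]
    _ = _ := mul_nonsing_inv_cancel_right _ _
        (isUnit_det_one_add_mul_mul_nonsing_inv_mul P V W K hP hS)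

end PushThrough

theorem one_add_fromBlocks_zero_mul_transpose {ι κ μ ν R : Type*} [DecidableEq ι] [DecidableEq κ]
    [Fintype μ] [Fintype ν] [CommRing R] (D : Matrix κ ν R) (T : Matrix κ μ R) :
    (1 + fromBlocks 0 0 D T * (fromBlocks 0 0 D T)ᵀ : Matrix (ι ⊕ κ) (ι ⊕ κ) R) =
      fromBlocks 1 0 0 (1 + fromCols D T * (fromCols D T)ᵀ) := by
  rw [fromBlocks_transpose, fromBlocks_multiply, transpose_fromCols, fromCols_mul_fromRows,
    ← fromBlocks_one, fromBlocks_add]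
  simp

theorem isUnit_one_add_mul_transpose {κ μ : Type*} [Fintype κ] [DecidableEq κ] [Fintype μ]
    (T : Matrix κ μ ℝ) : IsUnit (1 + T * Tᵀ) := by
  have hT : (T * Tᵀ).PosSemidef := by simpa using posSemidef_self_mul_conjTranspose T
  exact (PosDef.one.add_posSemidef hT).isUnit

end Matrix

theorem stmt_8 {n m l q r : ℕ}
    (A : Matrix (Fin n) (Fin n) ℝ) (B : Matrix (Fin n) (Fin m) ℝ)
    (C : Matrix (Fin l) (Fin n) ℝ)
    (V : Matrix (Fin q) (Fin n) ℝ) (T : Matrix (Fin q) (Fin r) ℝ)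
    (X : Matrix (Fin n) (Fin n) ℝ)
    (hX : X = Vᵀ * (1 + T * Tᵀ)⁻¹ * V) :
    Cᵀ * C + Aᵀ * X * (1 + B * Bᵀ * X)⁻¹ * A =
      (fromRows C (V * A))ᵀ *
        (1 + (fromBlocks 0 0 (V * B) T) * (fromBlocks 0 0 (V * B) T)ᵀ :
          Matrix (Fin l ⊕ Fin q) (Fin l ⊕ Fin q) ℝ)⁻¹ *
        fromRows C (V * A) := by
  set S := 1 + fromCols (V * B) T * (fromCols (V * B) T)ᵀ with hSdef
  have hS : S = 1 + T * Tᵀ + V * (B * Bᵀ) * Vᵀ := by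
    rw [hSdef, transpose_fromCols, fromCols_mul_fromRows, transpose_mul]
    simp only [Matrix.mul_assoc]
    abel
  have hSunit : IsUnit S := isUnit_one_add_mul_transpose _
  have hRiccati : X * (1 + B * Bᵀ * X)⁻¹ = Vᵀ * S⁻¹ * V := by
    rw [hS, hX]
    exact mul_nonsing_inv_mul_mul_inv_one_add_mul _ _ _ _
      ((isUnit_iff_isUnit_det _).1 (isUnit_one_add_mul_transpose T))
      (hS ▸ (isUnit_iff_isUnit_det _).1 hSunit)
  rw [one_add_fromBlocks_zero_mul_transpose,
    inv_fromBlocks_zero₁₂_of_isUnit_iff _ _ _ (iff_of_true isUnit_one hSunit), transpose_fromRows,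
    fromCols_mul_fromBlocks, fromCols_mul_fromRows, Matrix.mul_assoc Aᵀ X, hRiccati]
  simp [Matrix.mul_assoc, transpose_mul]
end

section
/- Closed form of the difference Riccati iterates: with V_t = [C; CA; CA²; …; CA^{t−1}] and T_t the block lower-triangular Toeplitz matrix with zero diagonal blocks and subdiagonal blocks CB, CAB, …, CA^{t−2}B, the sequence generated by X₀ = 0, X_{t+1} = CᵀC + AᵀX_t(I + BBᵀX_t)⁻¹A satisfies X_t = V_tᵀ(I + T_tT_tᵀ)⁻¹V_t for all t ≥ 1. -/
/-!
Peel off the first block row. Reindexing `Fin (t + 1) × Fin l` as `Fin l ⊕ Fin t × Fin l`,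
`V_{t+1} = [C; V_t A]` and `T_{t+1} = [[0, 0], [V_t B, T_t]]`, so `I + T_{t+1} T_{t+1}ᵀ` is block
diagonal with blocks `I` and `M + V_t B Bᵀ V_tᵀ`, where `M = I + T_t T_tᵀ`. Hence the closed form at
`t + 1` is `CᵀC + Aᵀ V_tᵀ (M + V_t B Bᵀ V_tᵀ)⁻¹ V_t A`, and the push-through identity
`(M + V G Vᵀ) M⁻¹ V = V (I + G Vᵀ M⁻¹ V)` rewrites the middle factor as `Y (I + B Bᵀ Y)⁻¹` with
`Y = V_tᵀ M⁻¹ V_t`, which is exactly one step of the Riccati recursion.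
-/

open Matrix

/-- `V t = [C; CA; …; CA^{t-1}]`, with block row index `Fin t`. -/
def obsMat {n l : ℕ} (A : Matrix (Fin n) (Fin n) ℝ) (C : Matrix (Fin l) (Fin n) ℝ)
    (t : ℕ) : Matrix (Fin t × Fin l) (Fin n) ℝ :=
  fun a j => (C * A ^ (a.1 : ℕ)) a.2 j

/-- `T t`: block lower-triangular Toeplitz matrix with zero diagonal blocks and
subdiagonal blocks `CB, CAB, …, CA^{t-2}B`. -/
def toepMat {n m l : ℕ} (A : Matrix (Fin n) (Fin n) ℝ) (B : Matrix (Fin n) (Fin m) ℝ)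
    (C : Matrix (Fin l) (Fin n) ℝ) (t : ℕ) :
    Matrix (Fin t × Fin l) (Fin t × Fin m) ℝ :=
  fun a b =>
    if (b.1 : ℕ) < (a.1 : ℕ) then (C * A ^ ((a.1 : ℕ) - (b.1 : ℕ) - 1) * B) a.2 b.2
    else 0

theorem Matrix.mul_inv_add_mul_mul_mul {R : Type*} [CommRing R] {p q r : Type*} [Fintype p]
    [DecidableEq p] [Fintype q] [DecidableEq q] (U : Matrix r p R) (M : Matrix p p R)
    (V : Matrix p q R) (G : Matrix q q R) (W : Matrix q p R) (hM : IsUnit M)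
    (hK : IsUnit (M + V * G * W)) (hG : IsUnit (1 + G * (W * M⁻¹ * V))) :
    U * (M + V * G * W)⁻¹ * V = U * M⁻¹ * V * (1 + G * (W * M⁻¹ * V))⁻¹ := by
  have push : (M + V * G * W) * (M⁻¹ * V) = V * (1 + G * (W * M⁻¹ * V)) := by
    simp only [Matrix.add_mul, Matrix.mul_add, Matrix.mul_one, Matrix.mul_assoc,
      mul_nonsing_inv_cancel_left _ _ ((isUnit_iff_isUnit_det M).mp hM)]
  have hMinv : M⁻¹ * V = (M + V * G * W)⁻¹ * V * (1 + G * (W * M⁻¹ * V)) := by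
    rw [Matrix.mul_assoc, ← push,
      nonsing_inv_mul_cancel_left _ _ ((isUnit_iff_isUnit_det _).mp hK)]
  rw [Matrix.mul_assoc U M⁻¹, hMinv, ← Matrix.mul_assoc, ← Matrix.mul_assoc,
    Matrix.mul_assoc _ (1 + _), mul_nonsing_inv _ ((isUnit_iff_isUnit_det _).mp hG),
    Matrix.mul_one, Matrix.mul_assoc U]

theorem Matrix.transpose_mul_inv_one_add_mul_transpose_mul_submatrix {R : Type*} [CommRing R]
    {r r' c c' n : Type*} [Fintype r] [DecidableEq r] [Fintype r'] [DecidableEq r']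
    [Fintype c] [Fintype c'] (V : Matrix r n R) (T : Matrix r c R) (e : r' ≃ r) (f : c' ≃ c) :
    Vᵀ * (1 + T * Tᵀ)⁻¹ * V
      = (V.submatrix e id)ᵀ * (1 + T.submatrix e f * (T.submatrix e f)ᵀ)⁻¹
        * V.submatrix e id := by
  have hreindex : 1 + T.submatrix e f * (T.submatrix e f)ᵀ = (1 + T * Tᵀ).submatrix e e := by
    rw [transpose_submatrix, submatrix_mul_equiv, ← submatrix_one_equiv e]
    rfl
  rw [hreindex, inv_submatrix_equiv, transpose_submatrix, submatrix_mul_equiv,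
    submatrix_mul_equiv, submatrix_id_id]

section Real

variable {p q r : Type*} [Fintype p] [Fintype q]

theorem Matrix.posSemidef_mul_transpose_self (M : Matrix p q ℝ) : (M * Mᵀ).PosSemidef := by
  simpa only [conjTranspose_eq_transpose_of_trivial] using posSemidef_self_mul_conjTranspose M

theorem Matrix.posDef_one_add_mul_transpose_self [DecidableEq p] (M : Matrix p q ℝ) :
    (1 + M * Mᵀ).PosDef :=
  PosDef.one.add_posSemidef (posSemidef_mul_transpose_self M)

theorem Matrix.PosSemidef.transpose_mul_mul_same {Y : Matrix p p ℝ} (hY : Y.PosSemidef)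
    (V : Matrix p q ℝ) : (Vᵀ * Y * V).PosSemidef := by
  simpa only [conjTranspose_eq_transpose_of_trivial] using hY.conjTranspose_mul_mul_same V

theorem Matrix.isUnit_one_add_mul_transpose_mul [DecidableEq p] {Y : Matrix p p ℝ}
    (hY : Y.PosSemidef) (B : Matrix p q ℝ) : IsUnit (1 + B * Bᵀ * Y) := by
  classical
  have hPD : (1 + Bᵀ * Y * B).PosDef := PosDef.one.add_posSemidef (hY.transpose_mul_mul_same B)
  rw [isUnit_iff_isUnit_det, Matrix.mul_assoc, det_one_add_mul_comm]
  exact (isUnit_iff_isUnit_det _).mp hPD.isUnit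

theorem Matrix.transpose_mul_inv_add_mul_mul_transpose_mul [Fintype r] [DecidableEq p]
    [DecidableEq q] {M : Matrix p p ℝ} (hM : M.PosDef) (V : Matrix p q ℝ) (B : Matrix q r ℝ) :
    Vᵀ * (M + V * B * (V * B)ᵀ)⁻¹ * V
      = Vᵀ * M⁻¹ * V * (1 + B * Bᵀ * (Vᵀ * M⁻¹ * V))⁻¹ := by
  have hK : (M + V * B * (V * B)ᵀ).PosDef := hM.add_posSemidef (posSemidef_mul_transpose_self _)
  have hG := isUnit_one_add_mul_transpose_mul (hM.inv.posSemidef.transpose_mul_mul_same V) B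
  rw [show V * B * (V * B)ᵀ = V * (B * Bᵀ) * Vᵀ by
    rw [transpose_mul, Matrix.mul_assoc, Matrix.mul_assoc, Matrix.mul_assoc]] at hK ⊢
  exact mul_inv_add_mul_mul_mul _ _ _ _ _ hM.isUnit hK.isUnit hG

end Real

theorem Matrix.fromRows_transpose_mul_inv_one_add_fromBlocks_mul_transpose_mul
    {r₁ r c₁ c n : Type*} [Fintype r₁] [DecidableEq r₁] [Fintype r] [DecidableEq r]
    [Fintype c₁] [Fintype c] (C : Matrix r₁ n ℝ) (W : Matrix r n ℝ) (D : Matrix r c₁ ℝ)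
    (T : Matrix r c ℝ) :
    (fromRows C W)ᵀ * (1 + fromBlocks (0 : Matrix r₁ c₁ ℝ) 0 D T
        * (fromBlocks (0 : Matrix r₁ c₁ ℝ) 0 D T)ᵀ)⁻¹ * fromRows C W
      = Cᵀ * C + Wᵀ * (1 + T * Tᵀ + D * Dᵀ)⁻¹ * W := by
  have hK : (1 + T * Tᵀ + D * Dᵀ).PosDef :=
    (posDef_one_add_mul_transpose_self T).add_posSemidef (posSemidef_mul_transpose_self D)
  have hblock : 1 + fromBlocks (0 : Matrix r₁ c₁ ℝ) 0 D T * (fromBlocks (0 : Matrix r₁ c₁ ℝ) 0 D T)ᵀ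
      = fromBlocks 1 0 0 (1 + T * Tᵀ + D * Dᵀ) := by
    rw [fromBlocks_transpose, fromBlocks_multiply, ← fromBlocks_one, fromBlocks_add]
    simp [add_comm, add_assoc]
  rw [hblock, inv_fromBlocks_zero₂₁_of_isUnit_iff _ _ _ (by simp [hK.isUnit])]
  simp [transpose_fromRows, fromCols_mul_fromBlocks, fromCols_mul_fromRows]

def finSuccProdEquiv (t : ℕ) (α : Type*) : α ⊕ Fin t × α ≃ Fin (t + 1) × α where
  toFun := Sum.elim (fun a => (0, a)) (Prod.map Fin.succ id)
  invFun x := Fin.cases Sum.inl (fun i a => Sum.inr (i, a)) x.1 x.2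
  left_inv := by rintro (a | ⟨i, a⟩) <;> rfl
  right_inv := by rintro ⟨i, a⟩; cases i using Fin.cases <;> rfl

section Riccati

variable {n m l : ℕ} (A : Matrix (Fin n) (Fin n) ℝ) (B : Matrix (Fin n) (Fin m) ℝ)
  (C : Matrix (Fin l) (Fin n) ℝ) (t : ℕ)

theorem obsMat_succ_submatrix :
    (obsMat A C (t + 1)).submatrix (finSuccProdEquiv t (Fin l)) id
      = fromRows C (obsMat A C t * A) := by
  ext (a | ⟨i, a⟩) j
  · simp [obsMat, finSuccProdEquiv]
  · simp only [submatrix_apply, finSuccProdEquiv, Equiv.coe_fn_mk, Sum.elim_inr, Prod.map,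
      id, fromRows_apply_inr, obsMat, Fin.val_succ, pow_succ, ← Matrix.mul_assoc]
    rfl

theorem toepMat_succ_submatrix :
    (toepMat A B C (t + 1)).submatrix (finSuccProdEquiv t (Fin l)) (finSuccProdEquiv t (Fin m))
      = fromBlocks 0 0 (obsMat A C t * B) (toepMat A B C t) := by
  ext (a | ⟨i, a⟩) (b | ⟨j, b⟩)
  · simp [toepMat, finSuccProdEquiv]
  · simp [toepMat, finSuccProdEquiv]
  · simp [toepMat, obsMat, finSuccProdEquiv, Matrix.mul_apply]
  · simp [toepMat, finSuccProdEquiv]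

noncomputable def riccatiClosedForm : Matrix (Fin n) (Fin n) ℝ :=
  (obsMat A C t)ᵀ * (1 + toepMat A B C t * (toepMat A B C t)ᵀ)⁻¹ * obsMat A C t

theorem riccatiClosedForm_zero : riccatiClosedForm A B C 0 = 0 := by
  rw [riccatiClosedForm, Subsingleton.elim (obsMat A C 0) 0]
  simp

theorem riccatiClosedForm_succ :
    riccatiClosedForm A B C (t + 1) = Cᵀ * C + Aᵀ * riccatiClosedForm A B C t
      * (1 + B * Bᵀ * riccatiClosedForm A B C t)⁻¹ * A := by
  rw [riccatiClosedForm, transpose_mul_inv_one_add_mul_transpose_mul_submatrix _ _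
      (finSuccProdEquiv t (Fin l)) (finSuccProdEquiv t (Fin m)), obsMat_succ_submatrix,
    toepMat_succ_submatrix, fromRows_transpose_mul_inv_one_add_fromBlocks_mul_transpose_mul,
    riccatiClosedForm, Matrix.mul_assoc Aᵀ,
    ← transpose_mul_inv_add_mul_mul_transpose_mul (posDef_one_add_mul_transpose_self _)]
  simp only [transpose_mul, Matrix.mul_assoc]

end Riccati

theorem stmt_9 {n m l : ℕ}
    (A : Matrix (Fin n) (Fin n) ℝ) (B : Matrix (Fin n) (Fin m) ℝ)
    (C : Matrix (Fin l) (Fin n) ℝ)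
    (X : ℕ → Matrix (Fin n) (Fin n) ℝ)
    (hX0 : X 0 = 0)
    (hXrec : ∀ t, X (t + 1) = Cᵀ * C + Aᵀ * X t * (1 + B * Bᵀ * X t)⁻¹ * A) :
    ∀ t, 1 ≤ t →
      X t = (obsMat A C t)ᵀ *
        (1 + toepMat A B C t * (toepMat A B C t)ᵀ)⁻¹ * obsMat A C t := by
  rintro t -
  induction t with
  | zero => exact hX0.trans (riccatiClosedForm_zero A B C).symm
  | succ t ih =>
    rw [hXrec, ih, ← riccatiClosedForm, ← riccatiClosedForm_succ, riccatiClosedForm]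
end

section
/- For any X ⪰ 0 the first iterate of the Riccati recursion with a factored initial condition satisfies: CᵀC + AᵀΓᵀΓ(I + BBᵀΓᵀΓ)⁻¹A = [C; ΓA]ᵀ (I + [0; ΓB][0; ΓB]ᵀ)⁻¹ [C; ΓA], where [C; ΓA] denotes vertical stacking. -/
/-!
The weight `1 + [0; ΓB][0; ΓB]ᵀ` is block diagonal with blocks `1` and `1 + ΓB(ΓB)ᵀ`, so the
right-hand side equals `CᵀC + (ΓA)ᵀ(1 + ΓB(ΓB)ᵀ)⁻¹ΓA`. The push-through identity
`Γ(1 + BBᵀΓᵀΓ)⁻¹ = (1 + ΓBBᵀΓᵀ)⁻¹Γ` turns this into the left-hand side.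
-/

open Matrix

namespace Matrix

variable {m n p α : Type*} [CommRing α]

-- No invertibility hypothesis is needed: `1 + X * Y` and `1 + Y * X` have the same determinant
-- (Weinstein–Aronszajn), so either both inverses are genuine or both are the junk value `0`.
theorem inv_one_add_mul_mul_comm [Fintype m] [DecidableEq m] [Fintype n] [DecidableEq n]
    (X : Matrix m n α) (Y : Matrix n m α) :
    (1 + X * Y)⁻¹ * X = X * (1 + Y * X)⁻¹ := by
  by_cases h : IsUnit (1 + X * Y).det
  · have h' : IsUnit (1 + Y * X).det := by rwa [← det_one_add_mul_comm]
    have hcomm : (1 + X * Y) * X = X * (1 + Y * X) := by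
      rw [Matrix.add_mul, Matrix.mul_add, Matrix.one_mul, Matrix.mul_one, Matrix.mul_assoc]
    calc (1 + X * Y)⁻¹ * X = (1 + X * Y)⁻¹ * X * ((1 + Y * X) * (1 + Y * X)⁻¹) := by
          rw [mul_nonsing_inv _ h', Matrix.mul_one]
      _ = (1 + X * Y)⁻¹ * ((1 + X * Y) * X) * (1 + Y * X)⁻¹ := by
          rw [hcomm]; simp only [Matrix.mul_assoc]
      _ = X * (1 + Y * X)⁻¹ := by
          rw [← Matrix.mul_assoc, nonsing_inv_mul _ h, Matrix.one_mul]
  · have h' : ¬IsUnit (1 + Y * X).det := by rwa [← det_one_add_mul_comm]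
    rw [nonsing_inv_apply_not_isUnit _ h, nonsing_inv_apply_not_isUnit _ h', Matrix.zero_mul,
      Matrix.mul_zero]

theorem inv_fromBlocks_one_zero_zero [Fintype m] [DecidableEq m] [Fintype n] [DecidableEq n]
    (M : Matrix n n α) (hM : IsUnit M) :
    (fromBlocks (1 : Matrix m m α) 0 0 M)⁻¹ = fromBlocks 1 0 0 M⁻¹ := by
  rw [inv_fromBlocks_zero₂₁_of_isUnit_iff _ _ _ (iff_of_true isUnit_one hM)]
  simp

theorem one_add_fromRows_zero_mul_transpose [DecidableEq m] [DecidableEq n] [Fintype p]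
    (D : Matrix n p α) :
    1 + fromRows (0 : Matrix m p α) D * (fromRows (0 : Matrix m p α) D)ᵀ =
      fromBlocks 1 0 0 (1 + D * Dᵀ) := by
  rw [transpose_fromRows, fromRows_mul_fromCols, ← fromBlocks_one, fromBlocks_add]
  simp

theorem fromRows_transpose_mul_fromBlocks_one_mul [Fintype m] [DecidableEq m] [Fintype p]
    (C : Matrix m n α) (E : Matrix p n α) (W : Matrix p p α) :
    (fromRows C E)ᵀ * fromBlocks (1 : Matrix m m α) 0 0 W * fromRows C E =
      Cᵀ * C + Eᵀ * W * E := by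
  rw [transpose_fromRows, fromCols_mul_fromBlocks, fromCols_mul_fromRows]
  simp

theorem isUnit_one_add_mul_transpose_s10 [Fintype n] [DecidableEq n] [Fintype p]
    (D : Matrix n p ℝ) : IsUnit (1 + D * Dᵀ) :=
  (PosDef.one.add_posSemidef (by simpa using posSemidef_self_mul_conjTranspose D)).isUnit

end Matrix

theorem stmt_10 {n m l r : ℕ}
    (A : Matrix (Fin n) (Fin n) ℝ) (B : Matrix (Fin n) (Fin m) ℝ)
    (C : Matrix (Fin l) (Fin n) ℝ) (Γ : Matrix (Fin r) (Fin n) ℝ) :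
    Cᵀ * C + Aᵀ * (Γᵀ * Γ) * (1 + B * Bᵀ * (Γᵀ * Γ))⁻¹ * A =
      (fromRows C (Γ * A))ᵀ *
        (1 + (fromRows (0 : Matrix (Fin l) (Fin m) ℝ) (Γ * B)) *
          (fromRows (0 : Matrix (Fin l) (Fin m) ℝ) (Γ * B))ᵀ)⁻¹ *
        fromRows C (Γ * A) := by
  have push := inv_one_add_mul_mul_comm Γ (B * Bᵀ * Γᵀ)
  rw [one_add_fromRows_zero_mul_transpose,
    inv_fromBlocks_one_zero_zero _ (isUnit_one_add_mul_transpose_s10 _),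
    fromRows_transpose_mul_fromBlocks_one_mul]
  simp only [transpose_mul, Matrix.mul_assoc] at push ⊢
  rw [← Matrix.mul_assoc Γ, ← push, Matrix.mul_assoc]
end

section
/- The Fréchet derivative of the Riccati operator D(X) = CᵀC + AᵀX(I + BBᵀX)⁻¹A at X is the linear map ΔX ↦ A_Xᵀ · ΔX · A_X, where A_X = (I + BBᵀX)⁻¹A is the closed loop matrix; equivalently, d(D(X)) = Aᵀ(I + XBBᵀ)⁻¹ dX (I + BBᵀX)⁻¹A. -/
/-!
By the product rule and the derivative `Δ ↦ -S⁻¹ K Δ S⁻¹` of inversion, with `S = 1 + K X`, the map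
`Y ↦ Y (1 + K Y)⁻¹` has derivative `Δ ↦ (1 - X S⁻¹ K) Δ S⁻¹` at `X`. The push-through identity
`1 - X (1 + K X)⁻¹ K = (1 + X K)⁻¹` turns this into `(1 + X K)⁻¹ Δ S⁻¹`, and for symmetric `X` and
`K = B Bᵀ` the left factor `Aᵀ (1 + X K)⁻¹` is the transpose of the closed loop matrix `S⁻¹ A`.
-/

open Matrix

attribute [local instance] Matrix.frobeniusNormedAddCommGroup Matrix.frobeniusNormedSpace
attribute [local instance] Matrix.frobeniusNormedRing Matrix.frobeniusNormedAlgebra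

theorem Ring.inverse_one_add_mul_comm {R : Type*} [Ring R] (a b : R) (h : IsUnit (1 + b * a)) :
    Ring.inverse (1 + a * b) = 1 - a * Ring.inverse (1 + b * a) * b := by
  set u := Ring.inverse (1 + b * a)
  have hright : (1 + a * b) * (1 - a * u * b) = 1 := by
    calc (1 + a * b) * (1 - a * u * b) = 1 + a * b - a * ((1 + b * a) * u) * b := by noncomm_ring
      _ = 1 := by rw [Ring.mul_inverse_cancel _ h]; noncomm_ring
  have hleft : (1 - a * u * b) * (1 + a * b) = 1 := by
    calc (1 - a * u * b) * (1 + a * b) = 1 + a * b - a * (u * (1 + b * a)) * b := by noncomm_ring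
      _ = 1 := by rw [Ring.inverse_mul_cancel _ h]; noncomm_ring
  exact Ring.inverse_unit ⟨_, _, hright, hleft⟩

open ContinuousLinearMap in
theorem hasFDerivAt_mul_inverse_one_add_mul {𝕜 R : Type*} [NontriviallyNormedField 𝕜]
    [NormedRing R] [HasSummableGeomSeries R] [NormedAlgebra 𝕜 R] {k x : R}
    (hx : IsUnit (1 + k * x)) :
    HasFDerivAt (fun y => y * Ring.inverse (1 + k * y))
      (mulLeftRight 𝕜 R (Ring.inverse (1 + x * k)) (Ring.inverse (1 + k * x))) x := by
  have hden : HasFDerivAt (fun y => 1 + k * y) (mul 𝕜 R k) x :=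
    ((mul 𝕜 R k).hasFDerivAt).const_add 1
  have hinv := (hx.unit_spec ▸ hasFDerivAt_ringInverse (𝕜 := 𝕜) hx.unit).comp x hden
  refine ((hasFDerivAt_id x).mul' hinv).congr_fderiv (ext fun Δ => ?_)
  simp only [id_eq, ← Ring.inverse_of_isUnit hx, neg_comp, smul_neg, Function.comp_apply,
    _root_.add_apply, _root_.neg_apply, _root_.smul_apply, ContinuousLinearMap.comp_apply,
    ContinuousLinearMap.mul_apply', mulLeftRight_apply, smul_eq_mul, id_apply,
    MulOpposite.smul_eq_mul_unop, MulOpposite.unop_op]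
  rw [Ring.inverse_one_add_mul_comm x k hx]
  noncomm_ring

theorem Matrix.transpose_nonsing_inv_one_add_mul_mul {n α : Type*} [Fintype n] [DecidableEq n]
    [CommRing α] {K X : Matrix n n α} (hK : Kᵀ = K) (hX : Xᵀ = X) (A : Matrix n n α) :
    ((1 + K * X)⁻¹ * A)ᵀ = Aᵀ * (1 + X * K)⁻¹ := by
  rw [transpose_mul, transpose_nonsing_inv, transpose_add, transpose_one, transpose_mul, hK, hX]

theorem stmt_13 {n m l : ℕ}
    (A : Matrix (Fin n) (Fin n) ℝ) (B : Matrix (Fin n) (Fin m) ℝ)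
    (C : Matrix (Fin l) (Fin n) ℝ)
    (X : Matrix (Fin n) (Fin n) ℝ) (hX : Xᵀ = X)
    (hinv : IsUnit (1 + B * Bᵀ * X)) :
    HasFDerivAt (fun Y : Matrix (Fin n) (Fin n) ℝ =>
        Cᵀ * C + Aᵀ * Y * (1 + B * Bᵀ * Y)⁻¹ * A)
      (LinearMap.toContinuousLinearMap
        (((LinearMap.mulLeft ℝ (((1 + B * Bᵀ * X)⁻¹ * A)ᵀ)).comp
          (LinearMap.mulRight ℝ ((1 + B * Bᵀ * X)⁻¹ * A))))) X ∧
    ∀ Δ : Matrix (Fin n) (Fin n) ℝ,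
      ((1 + B * Bᵀ * X)⁻¹ * A)ᵀ * Δ * ((1 + B * Bᵀ * X)⁻¹ * A) =
        Aᵀ * (1 + X * B * Bᵀ)⁻¹ * Δ * (1 + B * Bᵀ * X)⁻¹ * A := by
  have hclosed : ((1 + B * Bᵀ * X)⁻¹ * A)ᵀ = Aᵀ * (1 + X * B * Bᵀ)⁻¹ := by
    rw [transpose_nonsing_inv_one_add_mul_mul (by rw [transpose_mul, transpose_transpose]) hX,
      Matrix.mul_assoc X]
  refine ⟨?_, fun Δ => by rw [hclosed, Matrix.mul_assoc (Aᵀ * (1 + X * B * Bᵀ)⁻¹ * Δ)]⟩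
  have hfun : (fun Y => Cᵀ * C + Aᵀ * Y * (1 + B * Bᵀ * Y)⁻¹ * A) =
      fun Y => Cᵀ * C + Aᵀ * (Y * Ring.inverse (1 + B * Bᵀ * Y)) * A := by
    simp only [nonsing_inv_eq_ringInverse, Matrix.mul_assoc]
  rw [hfun]
  refine (((hasFDerivAt_mul_inverse_one_add_mul hinv).const_mul Aᵀ).mul_const' A
    |>.const_add (Cᵀ * C)).congr_fderiv (ContinuousLinearMap.ext fun Δ => ?_)
  change _ = ((1 + B * Bᵀ * X)⁻¹ * A)ᵀ * (Δ * ((1 + B * Bᵀ * X)⁻¹ * A))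
  rw [hclosed]
  simp only [Matrix.mul_assoc, _root_.smul_apply, ContinuousLinearMap.mulLeftRight_apply,
    smul_eq_mul, MulOpposite.smul_eq_mul_unop, MulOpposite.unop_op, nonsing_inv_eq_ringInverse]
end
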